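/- Let 0 < α < 1/3 and p ≥ 2 an integer. Suppose there exists b > 0 such that for each n = 0,1,…,p−1, b·α^{n/p} = Σ_{k=1}^{t_n} ε_{k,n} α^k for some t_n ∈ ℕ and ε_{k,n} ∈ {0,2,−2}. Then there exist a real a ≥ 0 and m' ∈ ℕ such that for the IFS Ψ = {α^{m'+1/p}x, α^{m'+1/p}x + b}, the set a + F_Ψ is contained in C_α. Consequently C_α contains a nontrivial self-similar subset admitting contraction ratio α^{q/p} with q coprime to p. -/

import Mathlib

/-- The central α-Cantor set: sums Σ_{n≥1} ε_n α^n with ε_n ∈ {0,2}. -/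
def centralCantor (α : ℝ) : Set ℝ :=
  {x | ∃ ε : ℕ → ℝ, (∀ n, ε n = 0 ∨ ε n = 2) ∧ x = ∑' n : ℕ, ε n * α ^ (n + 1)}

open Filter Topology Function

theorem stmt_16 (α : ℝ) (hα0 : 0 < α) (hα : α < 1/3)
    (p : ℕ) (hp : 2 ≤ p) (b : ℝ) (hb : 0 < b)
    (hexp : ∀ n < p, ∃ t : ℕ, ∃ ε : Fin t → ℝ,
      (∀ k, ε k = 0 ∨ ε k = 2 ∨ ε k = -2) ∧
      b * α ^ ((n : ℝ) / p) = ∑ k : Fin t, ε k * α ^ ((k : ℕ) + 1)) :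
    ∃ a : ℝ, 0 ≤ a ∧ ∃ m' : ℕ,
      (∀ F : Set ℝ, F.Nonempty → IsCompact F →
        F = (fun x => α ^ ((m' : ℝ) + 1 / p) * x) '' F ∪
            (fun x => α ^ ((m' : ℝ) + 1 / p) * x + b) '' F →
        ∀ x ∈ F, a + x ∈ centralCantor α) ∧
      Nat.Coprime (p * m' + 1) p ∧
      α ^ ((m' : ℝ) + 1 / p) = α ^ (((p * m' + 1 : ℕ) : ℝ) / p) := by
  classical
  have hp0 : 0 < p := by omega
  have hpR : (0:ℝ) < p := by exact_mod_cast hp0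
  have hα1 : α < 1 := by linarith
  choose t E hE hsum using hexp
  set T : ℕ := (Finset.range p).sup (fun n => if h : n < p then t n h else 0) with hT
  set m' : ℕ := T + 1 with hm'
  have hkp : ∀ k : ℕ, k % p < p := fun k => Nat.mod_lt k hp0
  set τ : ℕ → ℕ := fun k => t (k % p) (hkp k) with hτ
  set E' : (k : ℕ) → Fin (τ k) → ℝ := fun k => E (k % p) (hkp k) with hE'def
  have hτT : ∀ k, τ k ≤ T := by
    intro k
    have h1 : (if h : k % p < p then t (k % p) h else 0) ≤ T :=
      Finset.le_sup (f := fun n => if h : n < p then t n h else 0)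
        (Finset.mem_range.mpr (hkp k))
    simpa [hkp k] using h1
  set M : ℕ → ℕ := fun k => m' * k + k / p with hMdef
  have hMmono : Monotone M := fun k k' hk =>
    Nat.add_le_add (Nat.mul_le_mul_left _ hk) (Nat.div_le_div_right hk)
  have hMstep : ∀ k, M k + m' ≤ M (k+1) := by
    intro k
    have h1 : k / p ≤ (k+1)/p := Nat.div_le_div_right (by omega)
    simp only [hMdef]
    have : m' * (k+1) = m' * k + m' := by ring
    omega
  set r : ℝ := α ^ ((m' : ℝ) + 1 / p) with hr
  have hr0 : 0 < r := Real.rpow_pos_of_pos hα0 _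
  have hr1 : r < 1 := Real.rpow_lt_one hα0.le hα1 (by positivity)
  -- key expansion
  have hbr : ∀ k : ℕ, b * r ^ k = ∑ j : Fin (τ k), E' k j * α ^ (M k + (j:ℕ) + 1) := by
    intro k
    have hknat : (k : ℝ) = p * ((k / p : ℕ) : ℝ) + ((k % p : ℕ) : ℝ) := by
      exact_mod_cast (Nat.div_add_mod k p).symm
    have hrk : r ^ k = α ^ (M k) * α ^ (((k % p : ℕ):ℝ) / p) := by
      rw [hr, ← Real.rpow_natCast (α ^ ((m':ℝ)+1/p)) k, ← Real.rpow_mul hα0.le,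
        ← Real.rpow_natCast α (M k), ← Real.rpow_add hα0]
      congr 1
      simp only [hMdef]
      push_cast
      field_simp
      nlinarith [hknat]
    calc b * r ^ k = α ^ (M k) * (b * α ^ (((k % p : ℕ):ℝ)/p)) := by rw [hrk]; ring
      _ = α ^ (M k) * ∑ j : Fin (τ k), E' k j * α ^ ((j:ℕ)+1) := by
          rw [hsum (k % p) (hkp k)]
      _ = ∑ j : Fin (τ k), E' k j * α ^ (M k + (j:ℕ) + 1) := by
          rw [Finset.mul_sum]
          refine Finset.sum_congr rfl fun j _ => ?_
          rw [show M k + (j:ℕ) + 1 = M k + ((j:ℕ)+1) by ring, pow_add]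
          ring
  -- position map
  have hgap : ∀ k k' : ℕ, k < k' → ∀ j : Fin (τ k), M k + (j:ℕ) < M k' := by
    intro k k' hkk j
    have hτk := hτT k
    have h1 : (j:ℕ) < m' := lt_of_lt_of_le j.2 (by omega)
    have h2 : M (k+1) ≤ M k' := hMmono hkk
    have := hMstep k
    omega
  set pos : (Σ k : ℕ, Fin (τ k)) → ℕ := fun i => M i.1 + (i.2:ℕ) with hposdef
  have hposinj : Function.Injective pos := by
    rintro ⟨k, j⟩ ⟨k', j'⟩ h
    simp only [hposdef] at h
    have hkk : k = k' := by
      rcases lt_trichotomy k k' with hlt | he | hlt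
      · exact absurd h (by have := hgap k k' hlt j; omega)
      · exact he
      · exact absurd h (by have := hgap k' k hlt j'; omega)
    subst hkk
    simp only [Sigma.mk.inj_iff, heq_eq_eq, true_and]
    exact Fin.ext (by omega)
  -- summability helper
  have hgeo : Summable (fun n : ℕ => (2:ℝ) * α ^ (n+1)) := by
    have : Summable (fun n : ℕ => α ^ n) := summable_geometric_of_lt_one hα0.le hα1
    exact ((this.mul_left α).mul_left 2).congr (fun n => by ring)
  have hsumI : Summable (fun i : Σ k : ℕ, Fin (τ k) => (2:ℝ) * α ^ (pos i + 1)) :=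
    hgeo.comp_injective hposinj
  have hbound : ∀ (d : (Σ k : ℕ, Fin (τ k)) → ℝ), (∀ i, |d i| ≤ 2) →
      Summable (fun i => d i * α ^ (pos i + 1)) := by
    intro d hd
    refine Summable.of_norm_bounded hsumI (fun i => ?_)
    rw [Real.norm_eq_abs, abs_mul, abs_pow, abs_of_pos hα0]
    exact mul_le_mul_of_nonneg_right (hd i) (by positivity)
  -- the digit correction
  set cdig : (Σ k : ℕ, Fin (τ k)) → ℝ := fun i => if E' i.1 i.2 = -2 then 2 else 0
    with hcdig
  have hcdig2 : ∀ i, |cdig i| ≤ 2 := by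
    intro i; simp only [hcdig]; split <;> simp
  have hasum : Summable (fun i => cdig i * α ^ (pos i + 1)) := hbound _ hcdig2
  set a : ℝ := ∑' i : Σ k : ℕ, Fin (τ k), cdig i * α ^ (pos i + 1) with ha
  have ha0 : 0 ≤ a := tsum_nonneg (fun i => by
    simp only [hcdig]; split <;> positivity)
  refine ⟨a, ha0, m', ?_, ?_, ?_⟩
  · -- main containment
    intro F hFne hFc hFeq x hxF
    obtain ⟨C, hC⟩ : ∃ C : ℝ, ∀ y ∈ F, |y| ≤ C := by
      obtain ⟨R, hR⟩ := hFc.isBounded.subset_closedBall 0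
      exact ⟨R, fun y hy => by simpa [Real.dist_eq] using hR hy⟩
    have key : ∀ y : ℝ, ∃ z c : ℝ, y ∈ F → z ∈ F ∧ (c = 0 ∨ c = 1) ∧ y = r * z + c * b := by
      intro y
      by_cases hy : y ∈ F
      · have hy2 : y ∈ (fun x => r * x) '' F ∪ (fun x => r * x + b) '' F := hFeq ▸ hy
        rcases hy2 with ⟨z, hz, hzy⟩ | ⟨z, hz, hzy⟩
        · exact ⟨z, 0, fun _ => ⟨hz, Or.inl rfl, by simp [← hzy]⟩⟩
        · exact ⟨z, 1, fun _ => ⟨hz, Or.inr rfl, by simp [← hzy]⟩⟩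
      · exact ⟨0, 0, fun h => absurd h hy⟩
    choose g cc hkey using key
    set Y : ℕ → ℝ := fun n => Nat.rec x (fun _ y => g y) n with hY
    have hYF : ∀ n, Y n ∈ F := by
      intro n
      induction n with
      | zero => exact hxF
      | succ n ih => exact (hkey (Y n) ih).1
    set ω : ℕ → ℝ := fun n => cc (Y n) with hω
    have hω01 : ∀ n, ω n = 0 ∨ ω n = 1 := fun n => (hkey (Y n) (hYF n)).2.1
    have hrec : ∀ n, Y n = r * Y (n+1) + ω n * b := fun n => (hkey (Y n) (hYF n)).2.2
    have hpartial : ∀ N, x = (∑ i ∈ Finset.range N, ω i * (b * r ^ i)) + r ^ N * Y N := by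
      intro N
      induction N with
      | zero => simp [hY]
      | succ N ih =>
        rw [Finset.sum_range_succ, ih, hrec N]; ring
    have hωle : ∀ k, 0 ≤ ω k ∧ ω k ≤ 1 := by
      intro k; rcases hω01 k with h | h <;> simp [h]
    have hfsummable : Summable (fun k => ω k * (b * r ^ k)) := by
      refine Summable.of_nonneg_of_le (fun k => ?_) (fun k => ?_)
        ((summable_geometric_of_lt_one hr0.le hr1).mul_left b)
      · have := (hωle k).1; positivity
      · have h1 := (hωle k).2
        have h2 : (0:ℝ) ≤ b * r ^ k := by positivity
        nlinarith
    have hxsum : HasSum (fun k => ω k * (b * r ^ k)) x := by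
      rw [hfsummable.hasSum_iff_tendsto_nat]
      have h1 : Tendsto (fun N : ℕ => r ^ N * Y N) atTop (𝓝 0) := by
        have hbp : Tendsto (fun N : ℕ => C * r ^ N) atTop (𝓝 0) := by
          simpa using (tendsto_pow_atTop_nhds_zero_of_lt_one hr0.le hr1).const_mul C
        refine squeeze_zero_norm (fun N => ?_) hbp
        rw [Real.norm_eq_abs, abs_mul, abs_pow, abs_of_pos hr0]
        calc r ^ N * |Y N| ≤ r ^ N * C :=
              mul_le_mul_of_nonneg_left (hC _ (hYF N)) (by positivity)
          _ = C * r ^ N := by ring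
      have h2 : (fun N => ∑ i ∈ Finset.range N, ω i * (b * r ^ i))
          = fun N => x - r ^ N * Y N := by
        funext N; have := hpartial N; linarith
      rw [h2]
      simpa using tendsto_const_nhds.sub h1
    -- digit functions on the sigma type
    set dfun : (Σ k : ℕ, Fin (τ k)) → ℝ := fun i => ω i.1 * E' i.1 i.2 with hdfun
    have hdfun2 : ∀ i, |dfun i| ≤ 2 := by
      intro i
      have hd1 : |ω i.1| ≤ 1 := by rcases hω01 i.1 with h | h <;> simp [h]
      have hd2 : |E' i.1 i.2| ≤ 2 := by
        rcases hE (i.1 % p) (hkp i.1) i.2 with h | h | h <;>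
          simp only [hE'def] <;> rw [h] <;> norm_num
      calc |dfun i| = |ω i.1| * |E' i.1 i.2| := abs_mul _ _
        _ ≤ 1 * 2 := mul_le_mul hd1 hd2 (abs_nonneg _) zero_le_one
        _ = 2 := by norm_num
    have hxsum2 : Summable (fun i => dfun i * α ^ (pos i + 1)) := hbound _ hdfun2
    have htsumx : ∑' i : Σ k : ℕ, Fin (τ k), dfun i * α ^ (pos i + 1) = x := by
      rw [Summable.tsum_sigma' (fun k => (hasSum_fintype _).summable) hxsum2]
      have hfib : ∀ k : ℕ, ∑' j : Fin (τ k), dfun ⟨k, j⟩ * α ^ (pos ⟨k, j⟩ + 1)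
          = ω k * (b * r ^ k) := by
        intro k
        rw [tsum_fintype, hbr k, Finset.mul_sum]
        refine Finset.sum_congr rfl fun j _ => ?_
        simp only [hdfun, hposdef]
        ring
      calc (∑' (k : ℕ) (j : Fin (τ k)), dfun ⟨k, j⟩ * α ^ (pos ⟨k, j⟩ + 1))
          = ∑' k : ℕ, ω k * (b * r ^ k) := by
            exact tsum_congr hfib
        _ = x := hxsum.tsum_eq
    -- total digits
    set dd : (Σ k : ℕ, Fin (τ k)) → ℝ := fun i => cdig i + dfun i with hdd
    have hdd02 : ∀ i, dd i = 0 ∨ dd i = 2 := by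
      intro i
      simp only [hdd, hcdig, hdfun]
      rcases hω01 i.1 with h | h <;>
        rcases hE (i.1 % p) (hkp i.1) i.2 with h2 | h2 | h2 <;>
          simp only [hE'def] at * <;> rw [h, h2] <;> norm_num
    set ε : ℕ → ℝ := fun n =>
      if h : ∃ i : Σ k : ℕ, Fin (τ k), pos i = n then dd h.choose else 0 with hεdef
    refine ⟨ε, fun n => ?_, ?_⟩
    · simp only [hεdef]
      split
      · exact hdd02 _
      · exact Or.inl rfl
    · -- a + x = ∑' n, ε n * α ^ (n+1)
      have hsupp : Function.support (fun n : ℕ => ε n * α ^ (n+1)) ⊆ Set.range pos := by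
        intro n hn
        simp only [Function.mem_support, hεdef] at hn
        by_contra hcon
        rw [dif_neg] at hn
        · simp at hn
        · rintro ⟨i, hi⟩; exact hcon ⟨i, hi⟩
      have hcomp : ∀ i : Σ k : ℕ, Fin (τ k),
          ε (pos i) * α ^ (pos i + 1) = dd i * α ^ (pos i + 1) := by
        intro i
        have hex : ∃ i' : Σ k : ℕ, Fin (τ k), pos i' = pos i := ⟨i, rfl⟩
        have : hex.choose = i := hposinj hex.choose_spec
        simp only [hεdef, dif_pos hex, this]
      have := hposinj.tsum_eq (f := fun n : ℕ => ε n * α ^ (n+1)) hsupp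
      rw [← this]
      have h2 : ∑' i, ε (pos i) * α ^ (pos i + 1)
          = ∑' i : Σ k : ℕ, Fin (τ k), dd i * α ^ (pos i + 1) := tsum_congr hcomp
      rw [h2]
      have h3 : ∑' i : Σ k : ℕ, Fin (τ k), dd i * α ^ (pos i + 1)
          = (∑' i, cdig i * α ^ (pos i + 1)) + ∑' i, dfun i * α ^ (pos i + 1) := by
        rw [← Summable.tsum_add hasum hxsum2]
        exact tsum_congr fun i => by simp only [hdd]; ring
      rw [h3, htsumx, ← ha]
  · have h1 : Nat.Coprime (1 + p * m') p :=
      (Nat.coprime_add_mul_left_left 1 p m').mpr (Nat.coprime_one_left p)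
    simpa [Nat.add_comm] using h1
  · congr 1
    push_cast
    field_simp
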